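/- arXiv:1605.04835 — 6 statements merged into one kernel-verified Lean document; each statement's English description precedes it below -/
import Mathlib

section
/- Let R be a regular language over Σ containing 0 in its alphabet, and let S = R(0⁺R)*. If a word w belongs to S(0⁺S)*, then w belongs to R(0⁺R)*. -/
open Computability

/-- The language `0⁺` of nonempty blocks of the letter `z`. -/
def zeroPlus {α : Type} (z : α) : Language α := {w | ∃ i, 1 ≤ i ∧ w = List.replicate i z}

theorem stmt_4 {α : Type} (z : α) (R : Language α)
    (S : Language α) (hS : S = R * (zeroPlus z * R)∗)
    (w : List α) (hw : w ∈ S * (zeroPlus z * S)∗) :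
    w ∈ R * (zeroPlus z * R)∗ := by
  subst hS
  set K := zeroPlus z * R with hK
  have h1 : zeroPlus z * (R * K∗) ≤ K∗ := by
    calc zeroPlus z * (R * K∗) = K * K∗ := by rw [hK, mul_assoc]
    _ ≤ K∗ := mul_kstar_le_kstar
  have h2 : (zeroPlus z * (R * K∗))∗ ≤ K∗ := by
    calc (zeroPlus z * (R * K∗))∗ ≤ K∗∗ := kstar_mono h1
    _ = K∗ := kstar_idem K
  have h3 : R * K∗ * (zeroPlus z * (R * K∗))∗ ≤ R * K∗ := by
    calc R * K∗ * (zeroPlus z * (R * K∗))∗ ≤ R * K∗ * K∗ :=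
      mul_le_mul_right h2 _
    _ = R * (K∗ * K∗) := mul_assoc ..
    _ = R * K∗ := by rw [kstar_mul_kstar]
  exact h3 hw
end

section
/- For every n ≥ 1, sep(0^n, 0^{n+(2n+1)!}) = n + 2. -/
noncomputable def sep {α : Type} (w x : List α) : ℕ :=
  sInf {n | ∃ M : DFA α (Fin n), w ∈ M.accepts ∧ x ∉ M.accepts}

lemma evalFrom_replicate {σ : Type*} (M : DFA (Fin 2) σ) (s : σ) (k : ℕ) :
    M.evalFrom s (List.replicate k (0 : Fin 2)) = (fun q => M.step q 0)^[k] s := by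
  induction k generalizing s with
  | zero => rfl
  | succ k ih =>
    rw [List.replicate_succ, Function.iterate_succ_apply]
    exact ih (M.step s 0)

lemma iter_step {α : Type*} (f : α → α) (a : α) (i c t : ℕ)
    (hc : f^[i + c] a = f^[i] a) (ht : i ≤ t) : f^[t + c] a = f^[t] a := by
  have h1 : t + c = (t - i) + (i + c) := by omega
  have h2 : t = (t - i) + i := by omega
  rw [h1, Function.iterate_add_apply, hc, ← Function.iterate_add_apply, ← h2]

lemma iter_periodic {α : Type*} (f : α → α) (a : α) (i c t : ℕ)
    (hc : f^[i + c] a = f^[i] a) (ht : i ≤ t) :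
    ∀ s, f^[t + s * c] a = f^[t] a := by
  intro s
  induction s with
  | zero => simp
  | succ s ih =>
    have h1 : t + (s + 1) * c = (t + s * c) + c := by ring
    rw [h1, iter_step f a i c (t + s * c) hc (by omega), ih]

lemma upper_mem (n : ℕ) (hn : 1 ≤ n) :
    (n + 2) ∈ {b | ∃ M : DFA (Fin 2) (Fin b),
      List.replicate n (0 : Fin 2) ∈ M.accepts ∧
      List.replicate (n + Nat.factorial (2 * n + 1)) (0 : Fin 2) ∉ M.accepts} := by
  set M : DFA (Fin 2) (Fin (n + 2)) :=
    ⟨fun q _ => ⟨min (q.val + 1) (n + 1), by omega⟩, ⟨0, by omega⟩, {⟨n, by omega⟩}⟩ with hM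
  have key : ∀ k, (fun q => M.step q 0)^[k] M.start = ⟨min k (n + 1), by omega⟩ := by
    intro k
    induction k with
    | zero => simp [hM]
    | succ k ih =>
      rw [Function.iterate_succ_apply', ih]
      simp only [hM]
      exact Fin.ext (by simp)
  refine ⟨M, ?_, ?_⟩
  · rw [DFA.mem_accepts, DFA.eval, evalFrom_replicate, key]
    simp only [hM, Set.mem_singleton_iff]
    exact Fin.ext (by simp)
  · rw [DFA.mem_accepts, DFA.eval, evalFrom_replicate, key]
    have hm : 1 ≤ Nat.factorial (2 * n + 1) := Nat.factorial_pos _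
    simp only [hM, Set.mem_singleton_iff]
    intro h
    rw [Fin.mk.injEq] at h
    omega

lemma lower_aux (n b : ℕ) (M : DFA (Fin 2) (Fin b))
    (hw : List.replicate n (0 : Fin 2) ∈ M.accepts)
    (hx : List.replicate (n + Nat.factorial (2 * n + 1)) (0 : Fin 2) ∉ M.accepts)
    (hn : 1 ≤ n) (hb : b ≤ n + 1)
    (i j : ℕ) (hij : i < j) (hj : j ≤ b)
    (heq : (fun q => M.step q 0)^[j] M.start = (fun q => M.step q 0)^[i] M.start) : False := by
  set f : Fin b → Fin b := fun q => M.step q 0 with hf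
  set c := j - i with hc
  have hc1 : 1 ≤ c := by omega
  have hcd : c ∣ Nat.factorial (2 * n + 1) := Nat.dvd_factorial (by omega) (by omega)
  obtain ⟨s, hs⟩ := hcd
  have hic : i + c = j := by omega
  have hper : f^[n + Nat.factorial (2 * n + 1)] M.start = f^[n] M.start := by
    rw [hs, Nat.mul_comm]
    exact iter_periodic f M.start i c n (hic ▸ heq) (by omega) s
  rw [DFA.mem_accepts, DFA.eval, evalFrom_replicate] at hw hx
  exact hx (hper ▸ hw)

theorem stmt_6 (n : ℕ) (hn : 1 ≤ n) :
    sep (List.replicate n (0 : Fin 2))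
      (List.replicate (n + Nat.factorial (2 * n + 1)) (0 : Fin 2)) = n + 2 := by
  have hmem := upper_mem n hn
  apply le_antisymm
  · exact Nat.sInf_le hmem
  · apply le_csInf ⟨n + 2, hmem⟩
    rintro b ⟨M, hw, hx⟩
    by_contra hlt
    push_neg at hlt
    have hb : b ≤ n + 1 := by omega
    have hb1 : 1 ≤ b := by
      have := M.start.isLt
      omega
    obtain ⟨i, j, hij, hg⟩ := Fintype.exists_ne_map_eq_of_card_lt
      (fun i : Fin (b + 1) => (fun q => M.step q 0)^[i.val] M.start) (by simp)
    rcases Ne.lt_or_gt hij with h | h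
    · exact lower_aux n b M hw hx hn hb i.val j.val h (by omega) hg.symm
    · exact lower_aux n b M hw hx hn hb j.val i.val h (by omega) hg
end

section
/- For all u, v ∈ {1,2}* and k ≥ 1, the word u 1^{2k+1} 2 v belongs to G_k if and only if both u and v belong to G_k. -/
open Computability

/-- The language `L_k` over the alphabet `{1,2}` (inside `Fin 3`). -/
def Lk (k : ℕ) : Language (Fin 3) :=
  {w | (∃ i, 1 ≤ i ∧ i ≤ k ∧ w = List.replicate (2 * i) (1 : Fin 3) ++ [2]) ∨
    (∃ l : List ℕ, l ≠ [] ∧ (∀ a ∈ l, 1 ≤ a) ∧ l.sum = 2 * k + 1 ∧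
      (∀ a ∈ l.dropLast, Even a) ∧
      w = (l.map (fun a => List.replicate a (1 : Fin 3) ++ [2])).flatten)}

/-- `G_k = L_k*`. -/
def Gk (k : ℕ) : Language (Fin 3) := (Lk k)∗

/-- `H_k = {1,2}* \ G_k`. -/
def Hk (k : ℕ) : Language (Fin 3) :=
  {w | (∀ c ∈ w, c = 1 ∨ c = 2) ∧ w ∉ Gk k}

/-- Auxiliary: cancel a replicate-prefix against a different head. -/
lemma rep_cancel {α : Type*} {c d : α} (hcd : c ≠ d) :
    ∀ (a b : ℕ) (r1 r2 : List α),
      List.replicate a c ++ d :: r1 = List.replicate b c ++ d :: r2 → a = b ∧ r1 = r2 := by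
  intro a
  induction a with
  | zero =>
    intro b r1 r2 h
    cases b with
    | zero => simpa using h
    | succ b =>
      exfalso
      simp [List.replicate_succ] at h
      exact hcd h.1.symm
  | succ a ih =>
    intro b r1 r2 h
    cases b with
    | zero =>
      exfalso
      simp [List.replicate_succ] at h
      exact hcd h.1
    | succ b =>
      simp only [List.replicate_succ, List.cons_append, List.cons.injEq] at h
      obtain ⟨h1, h2⟩ := ih b r1 r2 h.2
      exact ⟨by omega, h2⟩

lemma Lk_ends (k : ℕ) {x : List (Fin 3)} (hx : x ∈ Lk k) : ∃ y, x = y ++ [2] := by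
  rcases hx with ⟨i, _, _, rfl⟩ | ⟨l, hne, _, _, _, rfl⟩
  · exact ⟨_, rfl⟩
  · rcases List.eq_nil_or_concat l with rfl | ⟨l', a, rfl⟩
    · exact absurd rfl hne
    · refine ⟨(l'.map (fun a => List.replicate a (1 : Fin 3) ++ [2])).flatten
        ++ List.replicate a (1 : Fin 3), ?_⟩
      simp [List.flatten_append]

lemma count_blocks (l : List ℕ) :
    ((l.map (fun a => List.replicate a (1 : Fin 3) ++ [2])).flatten).count 1 = l.sum := by
  induction l with
  | nil => simp
  | cons a l ih =>
    simp [List.count_append, List.count_replicate, ih]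

lemma main_lemma (k : ℕ) :
    ∀ L : List (List (Fin 3)), (∀ y ∈ L, y ∈ Lk k) →
      ∀ u v : List (Fin 3),
        L.flatten = u ++ (List.replicate (2 * k + 1) (1 : Fin 3) ++ 2 :: v) →
        u ∈ Gk k ∧ v ∈ Gk k := by
  intro L
  induction L with
  | nil =>
    intro _ u v h
    exfalso
    have := congrArg List.length h
    simp at this
  | cons x L ih =>
    intro hL u v h
    have hx : x ∈ Lk k := hL x (List.mem_cons_self)
    have hL' : ∀ y ∈ L, y ∈ Lk k := fun y hy => hL y (List.mem_cons_of_mem _ hy)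
    simp only [List.flatten_cons] at h
    by_cases hle : x.length ≤ u.length
    · -- x is a prefix of u
      have hpx : x <+: u ++ (List.replicate (2 * k + 1) (1 : Fin 3) ++ 2 :: v) :=
        ⟨L.flatten, h⟩
      have hpu : u <+: u ++ (List.replicate (2 * k + 1) (1 : Fin 3) ++ 2 :: v) :=
        ⟨_, rfl⟩
      obtain ⟨u', rfl⟩ := List.prefix_of_prefix_length_le hpx hpu hle
      rw [List.append_assoc, List.append_cancel_left_eq] at h
      obtain ⟨hu', hv'⟩ := ih hL' u' v h
      constructor
      · -- x ++ u' ∈ Gk k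
        rw [Gk, Language.mem_kstar] at hu' ⊢
        obtain ⟨M, rfl, hM⟩ := hu'
        exact ⟨x :: M, by simp, by
          intro y hy
          rcases List.mem_cons.1 hy with rfl | hy
          · exact hx
          · exact hM y hy⟩
      · exact hv'
    · -- u is a proper prefix of x
      push_neg at hle
      have hpu : u <+: x ++ L.flatten := ⟨_, h.symm⟩
      have hpx : x <+: x ++ L.flatten := ⟨_, rfl⟩
      obtain ⟨t, rfl⟩ := List.prefix_of_prefix_length_le hpu hpx (le_of_lt hle)
      rw [List.append_assoc, List.append_cancel_left_eq] at h
      -- h : t ++ L.flatten = replicate (2k+1) 1 ++ 2 :: v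
      have ht : t ≠ [] := by
        intro hteq; rw [hteq] at hle; simp at hle
      obtain ⟨y, hy⟩ := Lk_ends k hx
      -- t ends with 2
      have htlen : t.length ≥ 2 * k + 2 := by
        by_contra hlen
        push_neg at hlen
        -- t is a prefix of the replicate, so all its elements are 1; but 2 ∈ t
        have hpt : t <+: (List.replicate (2 * k + 1) (1 : Fin 3) ++ 2 :: v) := ⟨_, h⟩
        have hpr : t <+: List.replicate (2 * k + 1) (1 : Fin 3) := by
          refine List.prefix_of_prefix_length_le hpt ⟨_, rfl⟩ ?_
          simp; omega
        have h2t : (2 : Fin 3) ∈ t := by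
          have hux : u ++ t = y ++ [2] := hy
          have ht1 : 1 ≤ t.length := List.length_pos_iff.2 ht
          have hulen : u.length ≤ y.length := by
            have := congrArg List.length hux
            simp [List.length_append] at this
            omega
          have : t = y.drop u.length ++ [2] := by
            have := congrArg (List.drop u.length) hux
            rwa [List.drop_left, List.drop_append_of_le_length hulen] at this
          rw [this]; simp
        have := List.eq_of_mem_replicate (hpr.subset h2t)
        exact absurd this (by decide)
      -- so replicate (2k+1) 1 ++ [2] is a prefix of t
      have hpt : (List.replicate (2 * k + 1) (1 : Fin 3) ++ [2]) <+: t := by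
        refine List.prefix_of_prefix_length_le ⟨v, by simp [h]⟩ ⟨_, h⟩ ?_
        simp; omega
      obtain ⟨t', rfl⟩ := hpt
      -- x = u ++ replicate (2k+1) 1 ++ [2] ++ t'
      replace h : t' ++ L.flatten = v := by
        rw [List.append_assoc, List.append_assoc, List.append_cancel_left_eq,
          List.singleton_append, List.cons.injEq] at h
        exact h.2
      -- analyse x ∈ Lk
      rcases hx with ⟨i, _hi1, hi2, hxe⟩ | ⟨l, hne, hpos, hsum, _heven, hxe⟩
      · -- count of 1's too big
        exfalso
        have hc := congrArg (List.count (1 : Fin 3)) hxe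
        simp [List.count_append, List.count_replicate] at hc
        have : (2:Fin 3) ≠ 1 := by decide
        omega
      · have hc := congrArg (List.count (1 : Fin 3)) hxe
        rw [count_blocks] at hc
        simp [List.count_append, List.count_replicate, hsum] at hc
        -- hc : count 1 u + (2k+1 + count 1 t') = 2k+1 roughly
        have hcu : u.count 1 = 0 ∧ t'.count 1 = 0 := by
          constructor <;> omega
        -- now x starts with 1 (first block nonempty)
        obtain ⟨a, l'', rfl⟩ : ∃ a l'', l = a :: l'' := by
          cases l with
          | nil => exact absurd rfl hne
          | cons a l'' => exact ⟨a, l'', rfl⟩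
        have ha : 1 ≤ a := hpos a (List.mem_cons_self)
        obtain ⟨a', rfl⟩ : ∃ a', a = a' + 1 := ⟨a - 1, by omega⟩
        match u, hcu.1 with
        | [], _ => ?_
        | c :: u₀, hcount => ?_
        · -- u = [] : structural comparison
          simp only [List.nil_append, List.map_cons, List.flatten_cons,
            List.replicate_succ] at hxe
          rw [List.append_assoc, List.singleton_append, List.append_assoc,
            List.singleton_append] at hxe
          have hxe' : List.replicate (2 * k + 1) (1 : Fin 3) ++ (2 : Fin 3) :: t' =
              List.replicate (a' + 1) (1 : Fin 3) ++ 2 ::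
                (l''.map (fun a => List.replicate a (1 : Fin 3) ++ [2])).flatten := by
            simpa [List.replicate_succ] using hxe
          obtain ⟨hab, hrest⟩ := rep_cancel (by decide : (1 : Fin 3) ≠ 2) _ _ _ _ hxe'
          have hsum'' : l''.sum = 0 := by
            simp at hsum; omega
          have hl'' : l'' = [] := by
            cases l'' with
            | nil => rfl
            | cons b l₃ =>
              have hb := hpos b (by simp)
              simp at hsum''
              omega
          subst hl''
          simp at hrest
          subst hrest
          refine ⟨?_, ?_⟩
          · exact Language.nil_mem_kstar _
          · rw [Gk, Language.mem_kstar]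
            exact ⟨L, by simp [← h], hL'⟩
        · -- u = u₀ ++ ... nonempty, first char of u must be 1
          exfalso
          have hc1 : c = 1 := by
            have hh := congrArg List.head? hxe
            simpa [List.replicate_succ] using hh
          rw [hc1] at hcount
          simp [List.count_cons] at hcount

theorem stmt_9 (k : ℕ) (hk : 1 ≤ k) (u v : List (Fin 3))
    (hu : ∀ c ∈ u, c = 1 ∨ c = 2) (hv : ∀ c ∈ v, c = 1 ∨ c = 2) :
    u ++ List.replicate (2 * k + 1) (1 : Fin 3) ++ [2] ++ v ∈ Gk k ↔
      u ∈ Gk k ∧ v ∈ Gk k := by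
  constructor
  · intro h
    rw [Gk, Language.mem_kstar] at h
    obtain ⟨L, hw, hL⟩ := h
    refine main_lemma k L hL u v ?_
    rw [← hw]; simp
  · rintro ⟨hu', hv'⟩
    rw [Gk, Language.mem_kstar] at hu' hv' ⊢
    obtain ⟨Lu, rfl, hLu⟩ := hu'
    obtain ⟨Lv, rfl, hLv⟩ := hv'
    refine ⟨Lu ++ [List.replicate (2 * k + 1) (1 : Fin 3) ++ [2]] ++ Lv, by simp, ?_⟩
    intro y hy
    simp only [List.mem_append, List.mem_singleton] at hy
    rcases hy with (hy | rfl) | hy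
    · exact hLu y hy
    · right
      exact ⟨[2 * k + 1], by simp, by simp, by simp, by simp, by simp⟩
    · exact hLv y hy
end

section
/- For every k ≥ 1, any DFA accepting the language G_k has at least 2^k states, i.e., stc(G_k) ≥ 2^k. -/
open Computability

/-- encode a list of block lengths as a word -/
def enc (l : List ℕ) : List (Fin 3) :=
  (l.map (fun a => List.replicate a (1 : Fin 3) ++ [2])).flatten

def IsCode (k : ℕ) (c : List ℕ) : Prop :=
  (∃ i, 1 ≤ i ∧ i ≤ k ∧ c = [2 * i]) ∨
  (c ≠ [] ∧ (∀ a ∈ c, 1 ≤ a) ∧ c.sum = 2 * k + 1 ∧ ∀ a ∈ c.dropLast, Even a)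

def code : List ℕ → List ℕ
  | [] => []
  | [x] => [2 * x]
  | x :: y :: t => 2 * (x - y) :: code (y :: t)

lemma enc_append (a b : List ℕ) : enc (a ++ b) = enc a ++ enc b := by
  simp [enc]

lemma enc_cons (a : ℕ) (l : List ℕ) :
    enc (a :: l) = List.replicate a (1 : Fin 3) ++ 2 :: enc l := by
  simp [enc]

lemma rep_eq {a b : ℕ} {u v : List (Fin 3)}
    (h : List.replicate a (1 : Fin 3) ++ 2 :: u = List.replicate b (1 : Fin 3) ++ 2 :: v) :
    a = b ∧ u = v := by
  induction a generalizing b with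
  | zero =>
    cases b with
    | zero => simpa using h
    | succ b => simp [List.replicate_succ] at h
  | succ a ih =>
    cases b with
    | zero => simp [List.replicate_succ] at h
    | succ b =>
      simp only [List.replicate_succ, List.cons_append, List.cons.injEq] at h
      obtain ⟨h1, h2⟩ := ih h.2
      exact ⟨by omega, h2⟩

lemma enc_inj {l₁ l₂ : List ℕ} (h : enc l₁ = enc l₂) : l₁ = l₂ := by
  induction l₁ generalizing l₂ with
  | nil =>
    cases l₂ with
    | nil => rfl
    | cons b t =>
      rw [enc_cons] at h
      exact absurd h.symm (by simp [enc])
  | cons a t ih =>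
    cases l₂ with
    | nil =>
      rw [enc_cons] at h
      exact absurd h (by simp [enc])
    | cons b t₂ =>
      rw [enc_cons, enc_cons] at h
      obtain ⟨h1, h2⟩ := rep_eq h
      rw [h1, ih h2]

lemma mem_Lk_iff {k : ℕ} {w : List (Fin 3)} :
    w ∈ Lk k ↔ ∃ c, IsCode k c ∧ w = enc c := by
  constructor
  · rintro (⟨i, h1, h2, h3⟩ | ⟨l, h1, h2, h3, h4, h5⟩)
    · exact ⟨[2 * i], Or.inl ⟨i, h1, h2, rfl⟩, by simp [enc, h3]⟩
    · exact ⟨l, Or.inr ⟨h1, h2, h3, h4⟩, h5⟩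
  · rintro ⟨c, (⟨i, h1, h2, h3⟩ | ⟨h1, h2, h3, h4⟩), rfl⟩
    · exact Or.inl ⟨i, h1, h2, by simp [enc, h3]⟩
    · exact Or.inr ⟨c, h1, h2, h3, h4, rfl⟩

lemma enc_flatten (cs : List (List ℕ)) : (cs.map enc).flatten = enc cs.flatten := by
  induction cs with
  | nil => simp [enc]
  | cons c cs ih => simp [enc_append, ih]

lemma code_sum {x : ℕ} {t : List ℕ} (h : (x :: t).Pairwise (· > ·)) :
    (code (x :: t)).sum = 2 * x := by
  induction t generalizing x with
  | nil => simp [code]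
  | cons y t ih =>
    have hxy : y < x := (List.pairwise_cons.1 h).1 y (by simp)
    have := ih (List.pairwise_cons.1 h).2
    simp only [code, List.sum_cons, this]
    omega

lemma code_drop : ∀ (l : List ℕ) (i : ℕ), (code l).drop i = code (l.drop i) := by
  intro l
  induction l using code.induct with
  | case1 => intro i; simp [code]
  | case2 x =>
    intro i
    match i with
    | 0 => rfl
    | i + 1 => simp [code]
  | case3 x y t ih =>
    intro i
    match i with
    | 0 => rfl
    | i + 1 =>
      show (code (y :: t)).drop i = _
      rw [ih i]
      rfl

lemma code_mem {k : ℕ} : ∀ {l : List ℕ}, l.Pairwise (· > ·) → (∀ x ∈ l, 1 ≤ x ∧ x ≤ k) →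
    ∀ a ∈ code l, Even a ∧ 2 ≤ a ∧ a ≤ 2 * k := by
  intro l
  induction l using code.induct with
  | case1 => intro _ _ a ha; simp [code] at ha
  | case2 x =>
    intro _ hb a ha
    simp [code] at ha
    have := hb x (by simp)
    subst ha
    exact ⟨even_two_mul x, by omega⟩
  | case3 x y t ih =>
    intro hp hb a ha
    simp only [code, List.mem_cons] at ha
    rcases ha with rfl | ha
    · have hxy : y < x := (List.pairwise_cons.1 hp).1 y (by simp)
      have hx := hb x (by simp)
      exact ⟨even_two_mul _, by omega⟩
    · exact ih (List.pairwise_cons.1 hp).2 (fun z hz => hb z (by simp [hz])) a ha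

lemma mem_of_suffix_sum {s : ℕ} {l B : List ℕ} (hp : l.Pairwise (· > ·))
    (hB : B <:+ code l) (hsum : B.sum = 2 * s) (hs : 1 ≤ s) : s ∈ l := by
  obtain ⟨C, hC⟩ := hB
  have hlen : B = (code l).drop C.length := by
    rw [← hC]; simp
  rw [code_drop] at hlen
  rcases hd : l.drop C.length with _ | ⟨h, t⟩
  · rw [hd] at hlen
    simp only [code] at hlen
    rw [hlen] at hsum
    simp at hsum
    omega
  · rw [hd] at hlen
    have hpd : (h :: t).Pairwise (· > ·) := by
      rw [← hd]; exact hp.sublist (List.drop_sublist _ _)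
    have := code_sum hpd
    rw [← hlen] at this
    have hhs : h = s := by omega
    have : h ∈ l := by
      have : h ∈ l.drop C.length := by rw [hd]; simp
      exact List.mem_of_mem_drop this
    rwa [← hhs]

/-- the backward structural lemma -/
lemma runs {k : ℕ} : ∀ cs : List (List ℕ), (∀ c ∈ cs, IsCode k c) →
    ∀ A r, (∀ a ∈ A, Even a) → ¬ Even r → cs.flatten = A ++ [r] →
    ∃ B, B <:+ A ∧ B.sum + r = 2 * k + 1 := by
  intro cs
  induction cs with
  | nil =>
    intro _ A r _ _ h
    exact absurd (congrArg List.length h) (by simp)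
  | cons c cs ih =>
    intro hcodes A r hA hr h
    simp only [List.flatten_cons] at h
    rcases eq_or_ne cs.flatten [] with he | he
    · rw [he, List.append_nil] at h
      rcases hcodes c (by simp) with ⟨i, h1, h2, h3⟩ | ⟨h1, h2, h3, h4⟩
      · -- c = [2i], so A = [] and r = 2i even, contradiction
        rw [h3] at h
        have hlen := congrArg List.length h
        simp only [List.length_append, List.length_singleton, List.length_cons,
          List.length_nil] at hlen
        have hA0 : A = [] := List.length_eq_zero_iff.mp (by omega)
        rw [hA0, List.nil_append] at h
        have : r = 2 * i := by injection h.symm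
        exact absurd (this ▸ even_two_mul i) hr
      · refine ⟨A, List.suffix_refl A, ?_⟩
        rw [← h3, h]
        simp
    · have hne : cs.flatten.length ≠ 0 := fun h0 => he (List.length_eq_zero_iff.mp h0)
      have hlc : c.length ≤ A.length := by
        have h1 := congrArg List.length h
        rw [List.length_append, List.length_append, List.length_singleton] at h1
        omega
      have hc : c = A.take c.length := by
        have := congrArg (List.take c.length) h
        rwa [List.take_left, List.take_append_of_le_length hlc] at this
      have hrest : cs.flatten = A.drop c.length ++ [r] := by
        have := congrArg (List.drop c.length) h
        rwa [List.drop_left, List.drop_append_of_le_length hlc] at this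
      obtain ⟨B, hB1, hB2⟩ := ih (fun x hx => hcodes x (by simp [hx]))
        (A.drop c.length) r (fun a ha => hA a (List.mem_of_mem_drop ha)) hr hrest
      exact ⟨B, hB1.trans (List.drop_suffix _ _), hB2⟩

lemma exists_codes {k : ℕ} : ∀ L : List (List (Fin 3)), (∀ u ∈ L, u ∈ Lk k) →
    ∃ cs : List (List ℕ), L = cs.map enc ∧ ∀ c ∈ cs, IsCode k c := by
  intro L
  induction L with
  | nil => exact fun _ => ⟨[], rfl, by simp⟩
  | cons u L ih =>
    intro h
    obtain ⟨c, hc1, hc2⟩ := mem_Lk_iff.1 (h u (by simp))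
    obtain ⟨cs, hcs1, hcs2⟩ := ih (fun v hv => h v (by simp [hv]))
    refine ⟨c :: cs, by simp [hc2, hcs1], ?_⟩
    intro x hx
    rcases List.mem_cons.1 hx with rfl | hx
    · exact hc1
    · exact hcs2 x hx

/-- The key membership characterization. -/
lemma mem_Gk_iff {k s : ℕ} {l : List ℕ} (hp : l.Pairwise (· > ·))
    (hb : ∀ x ∈ l, 1 ≤ x ∧ x ≤ k) (hs1 : 1 ≤ s) (hs2 : s ≤ k) :
    enc (code l ++ [2 * k + 1 - 2 * s]) ∈ Gk k ↔ s ∈ l := by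
  constructor
  · intro hmem
    obtain ⟨L, hL1, hL2⟩ := Language.mem_kstar.1 hmem
    obtain ⟨cs, rfl, hcodes⟩ := exists_codes L hL2
    rw [enc_flatten] at hL1
    have hflat : cs.flatten = code l ++ [2 * k + 1 - 2 * s] := enc_inj hL1.symm
    obtain ⟨B, hB1, hB2⟩ := runs (k := k) cs hcodes (code l) _
      (fun a ha => (code_mem hp hb a ha).1)
      (by intro hh; rcases hh with ⟨m, hm⟩; omega) hflat
    exact mem_of_suffix_sum hp hB1 (by omega) hs1
  · intro hsl
    obtain ⟨p, t, rfl⟩ := List.append_of_mem hsl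
    rw [Gk, Language.mem_kstar]
    set r := 2 * k + 1 - 2 * s with hr
    set l := p ++ s :: t with hl
    have hcodesplit : code l = (code l).take p.length ++ code (s :: t) := by
      conv_lhs => rw [← List.take_append_drop p.length (code l)]
      rw [code_drop, hl, List.drop_left]
    have hpst : (s :: t).Pairwise (· > ·) := hp.sublist (List.sublist_append_right _ _)
    have hb' : ∀ x ∈ s :: t, 1 ≤ x ∧ x ≤ k := by
      intro x hx
      exact hb x (by rw [hl]; exact List.mem_append_right _ hx)
    set cs : List (List ℕ) :=
      ((code l).take p.length).map (fun a => [a]) ++ [code (s :: t) ++ [r]] with hcs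
    refine ⟨cs.map enc, ?_, ?_⟩
    · rw [enc_flatten]
      congr 1
      rw [hcs, List.flatten_append]
      have h1 : ∀ L : List ℕ, (L.map (fun a => [a])).flatten = L := by
        intro L; induction L with
        | nil => rfl
        | cons a t ih => simp [ih]
      rw [h1]
      simp only [List.flatten_cons, List.flatten_nil, List.append_nil]
      rw [← List.append_assoc, ← hcodesplit]
    · intro y hy
      obtain ⟨c, hc, rfl⟩ := List.mem_map.1 hy
      rw [hcs] at hc
      rcases List.mem_append.1 hc with hc | hc
      · obtain ⟨a, ha, rfl⟩ := List.mem_map.1 hc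
        have ha' : a ∈ code l := List.mem_of_mem_take ha
        obtain ⟨hev, h2, h2k⟩ := code_mem hp hb a ha'
        obtain ⟨m, hm⟩ := hev
        exact mem_Lk_iff.2 ⟨[a], Or.inl ⟨m, by omega, by omega, by rw [hm, two_mul]⟩, rfl⟩
      · simp only [List.mem_singleton] at hc
        subst hc
        refine mem_Lk_iff.2 ⟨code (s :: t) ++ [r], Or.inr ⟨by simp, ?_, ?_, ?_⟩, rfl⟩
        · intro a ha
          rcases List.mem_append.1 ha with ha | ha
          · have := code_mem hpst hb' a ha
            omega
          · simp only [List.mem_singleton] at ha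
            omega
        · rw [List.sum_append, code_sum hpst]
          have hbs := hb' s (by simp)
          simp only [List.sum_cons, List.sum_nil]
          omega
        · rw [List.dropLast_concat]
          exact fun a ha => (code_mem hpst hb' a ha).1

theorem stmt_10 (k : ℕ) (hk : 1 ≤ k) {σ : Type} [Fintype σ] (M : DFA (Fin 3) σ)
    (hM : M.accepts = Gk k) : 2 ^ k ≤ Fintype.card σ := by
  classical
  -- list of a finset, strictly decreasing, values in [1,k]
  let lst : Finset (Fin k) → List ℕ :=
    fun S => ((S.sort (· ≤ ·)).map (fun x : Fin k => (x : ℕ) + 1)).reverse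
  have hpair : ∀ S, (lst S).Pairwise (· > ·) := by
    intro S
    rw [List.pairwise_reverse]
    refine List.Pairwise.map _ ?_ (List.sortedLT_iff_pairwise.1 S.sortedLT_sort)
    intro a b h
    have : (a : ℕ) < b := h
    omega
  have hbd : ∀ S, ∀ x ∈ lst S, 1 ≤ x ∧ x ≤ k := by
    intro S x hx
    simp only [lst, List.mem_reverse, List.mem_map] at hx
    obtain ⟨a, _, rfl⟩ := hx
    exact ⟨by omega, by have := a.2; omega⟩
  have hmemlst : ∀ (S : Finset (Fin k)) (s : Fin k), ((s : ℕ) + 1) ∈ lst S ↔ s ∈ S := by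
    intro S s
    simp only [lst, List.mem_reverse, List.mem_map, Finset.mem_sort]
    constructor
    · rintro ⟨a, ha, h⟩
      have : a = s := Fin.ext (by omega)
      rwa [← this]
    · exact fun h => ⟨s, h, rfl⟩
  have hinj : Function.Injective (fun S : Finset (Fin k) => M.eval (enc (code (lst S)))) := by
    intro S T h
    simp only at h
    ext s
    have key : ∀ (U : Finset (Fin k)),
        (enc (code (lst U) ++ [2 * k + 1 - 2 * ((s : ℕ) + 1)]) ∈ Gk k ↔ s ∈ U) := by
      intro U
      rw [mem_Gk_iff (hpair U) (hbd U) (by omega) (by have := s.isLt; omega)]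
      exact hmemlst U s
    have heval : ∀ (U : Finset (Fin k)),
        enc (code (lst U) ++ [2 * k + 1 - 2 * ((s : ℕ) + 1)]) ∈ M.accepts ↔
        M.evalFrom (M.eval (enc (code (lst U)))) (enc [2 * k + 1 - 2 * ((s : ℕ) + 1)]) ∈ M.accept := by
      intro U
      rw [DFA.mem_accepts, enc_append, DFA.eval, DFA.evalFrom_of_append]
    rw [← key S, ← key T, ← hM, heval S, heval T, h]
  calc 2 ^ k = Fintype.card (Finset (Fin k)) := by simp
    _ ≤ Fintype.card σ := Fintype.card_le_of_injective _ hinj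
end

section
/- For every k ≥ 1, the reversal of G_k is accepted by a DFA with at most 5k + 3 states, i.e., stc(G_k^R) ≤ 5k + 3. -/
open Computability

namespace S11

def rep (t : ℕ) : List (Fin 3) := List.replicate t 1

def blk (a : ℕ) : List (Fin 3) := rep a ++ [2]

def jb (bs : List ℕ) : List (Fin 3) := (bs.map blk).flatten

@[simp] lemma jb_nil : jb [] = [] := rfl

@[simp] lemma jb_cons (b : ℕ) (bs : List ℕ) : jb (b :: bs) = rep b ++ 2 :: jb bs := by
  simp [jb, blk, List.append_assoc]

@[simp] lemma jb_append (as bs : List ℕ) : jb (as ++ bs) = jb as ++ jb bs := by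
  simp [jb]

@[simp] lemma rep_succ (t : ℕ) : rep (t+1) = 1 :: rep t := rfl

lemma one_ne_two : (1 : Fin 3) ≠ 2 := by decide

lemma mem_jb {c : Fin 3} {bs : List ℕ} (h : c ∈ jb bs) : c = 1 ∨ c = 2 := by
  induction bs with
  | nil => simp [jb] at h
  | cons b bs ih =>
    simp only [jb_cons, List.mem_append, List.mem_cons] at h
    rcases h with h | h | h
    · exact Or.inl (List.eq_of_mem_replicate h)
    · exact Or.inr h
    · exact ih h

/-- `OK k bs` : block sequence decomposes into `L_k` words. -/
inductive OK (k : ℕ) : List ℕ → Prop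
  | nil : OK k []
  | single (a : ℕ) (bs : List ℕ) : Even a → 2 ≤ a → a ≤ 2*k → OK k bs → OK k (a :: bs)
  | seg (l bs : List ℕ) : l ≠ [] → (∀ a ∈ l, 1 ≤ a) → (∀ a ∈ l.dropLast, Even a) →
      l.sum = 2*k+1 → OK k bs → OK k (l ++ bs)

/-- partial type-2 segment with sum σ followed by an OK sequence. -/
def EB (k : ℕ) (bs : List ℕ) (σ : ℕ) : Prop :=
  Odd σ ∧ ∃ l bs', l ≠ [] ∧ (∀ a ∈ l, 1 ≤ a) ∧ (∀ a ∈ l.dropLast, Even a) ∧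
    l.sum = σ ∧ OK k bs' ∧ bs = l ++ bs'

lemma OK.pos {k : ℕ} {bs : List ℕ} (h : OK k bs) : ∀ b ∈ bs, 1 ≤ b := by
  induction h with
  | nil => simp
  | single a bs he h2 hk hOK ih =>
    intro b hb; rcases List.mem_cons.1 hb with rfl | hb
    · omega
    · exact ih b hb
  | seg l bs hne hpos hev hsum hOK ih =>
    intro b hb; rcases List.mem_append.1 hb with hb | hb
    · exact hpos b hb
    · exact ih b hb

lemma EB.pos {k : ℕ} {bs : List ℕ} {σ : ℕ} (h : EB k bs σ) : ∀ b ∈ bs, 1 ≤ b := by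
  obtain ⟨-, l, bs', hne, hpos, hev, hsum, hOK, rfl⟩ := h
  intro b hb; rcases List.mem_append.1 hb with hb | hb
  · exact hpos b hb
  · exact hOK.pos b hb

lemma EB_nil {k σ : ℕ} (h : EB k [] σ) : False := by
  obtain ⟨-, l, bs', hne, -, -, -, -, heq⟩ := h
  exact hne (List.append_eq_nil_iff.1 heq.symm).1

end S11
namespace S11

lemma even_sum_list {l : List ℕ} (h : ∀ a ∈ l, Even a) : Even l.sum := by
  induction l with
  | nil => simp
  | cons a l ih =>
    simp only [List.sum_cons]
    exact (h a (by simp)).add (ih fun b hb => h b (List.mem_cons_of_mem _ hb))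

lemma ok_cons {k t : ℕ} {bs : List ℕ} (h : OK k (t :: bs)) :
    (Even t ∧ 2 ≤ t ∧ t ≤ 2*k ∧ OK k bs) ∨ (t = 2*k+1 ∧ OK k bs) ∨
      (Even t ∧ 2 ≤ t ∧ t ≤ 2*k ∧ EB k bs (2*k+1-t)) := by
  generalize hcs : t :: bs = cs at h
  cases h with
  | nil => exact absurd hcs (by simp)
  | single a bs0 he h2 hk hOK =>
    obtain ⟨rfl, rfl⟩ := List.cons.inj hcs
    exact Or.inl ⟨he, h2, hk, hOK⟩
  | seg l bs0 hne hpos hev hsum hOK =>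
    cases l with
    | nil => exact absurd rfl hne
    | cons a l2 =>
      rw [List.cons_append] at hcs
      obtain ⟨rfl, rfl⟩ := List.cons.inj hcs
      cases l2 with
      | nil =>
        simp only [List.sum_cons, List.sum_nil, add_zero] at hsum
        simp only [List.nil_append]
        exact Or.inr (Or.inl ⟨hsum, hOK⟩)
      | cons c l3 =>
        have hev' : ∀ a' ∈ (t :: c :: l3).dropLast, Even a' := hev
        rw [List.dropLast_cons₂] at hev'
        have het : Even t := hev' t (by simp)
        have h1t : 1 ≤ t := hpos t (by simp)
        have h2t : 2 ≤ t := by rcases het with ⟨r, rfl⟩; omega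
        have hsum' : t + (c :: l3).sum = 2*k+1 := by
          simpa [List.sum_cons, add_assoc] using hsum
        have hcsum : 1 ≤ (c :: l3).sum := by
          have : 1 ≤ c := hpos c (by simp)
          simp only [List.sum_cons]; omega
        refine Or.inr (Or.inr ⟨het, h2t, by omega, ?_⟩)
        refine ⟨?_, c :: l3, bs0, by simp, fun a ha => hpos a (by simp [ha]), ?_, by omega, hOK, rfl⟩
        · rw [Nat.odd_iff]; rcases het with ⟨r, rfl⟩; omega
        · intro a ha; exact hev' a (List.mem_cons_of_mem _ ha)

lemma ok_cons_even {k t : ℕ} {bs : List ℕ} (he : Even t) (h2 : 2 ≤ t) (hk : t ≤ 2*k)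
    (h : OK k bs) : OK k (t :: bs) := OK.single t bs he h2 hk h

lemma ok_cons_top {k : ℕ} {bs : List ℕ} (h : OK k bs) : OK k ((2*k+1) :: bs) := by
  have := OK.seg (k := k) [2*k+1] bs (by simp) (by intro a ha; simp only [List.mem_singleton] at ha; omega) (by simp) (by simp) h
  simpa using this

lemma ok_cons_eb {k t σ : ℕ} {bs : List ℕ} (he : Even t) (h2 : 2 ≤ t)
    (heb : EB k bs σ) (hsum : t + σ = 2*k+1) : OK k (t :: bs) := by
  obtain ⟨hodd, l, bs', hne, hpos, hev, hsuml, hOK, rfl⟩ := heb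
  have := OK.seg (k := k) (t :: l) bs' (by simp)
    (fun a ha => by
      rcases List.mem_cons.1 ha with rfl | ha'
      · omega
      · exact hpos a ha')
    (by
      cases l with
      | nil => exact absurd rfl hne
      | cons c l3 =>
        rw [List.dropLast_cons₂]
        intro a ha
        rcases List.mem_cons.1 ha with rfl | ha
        · exact he
        · exact hev a ha)
    (by simp [List.sum_cons, hsuml]; omega) hOK
  simpa using this

lemma eb_cons {k t σ : ℕ} {bs : List ℕ} (h : EB k (t :: bs) σ) :
    (σ = t ∧ Odd t ∧ OK k bs) ∨ (Even t ∧ 2 ≤ t ∧ t < σ ∧ EB k bs (σ - t)) := by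
  obtain ⟨hodd, l, bs', hne, hpos, hev, hsum, hOK, heq⟩ := h
  cases l with
  | nil => exact absurd rfl hne
  | cons a l2 =>
    rw [List.cons_append] at heq
    obtain ⟨rfl, rfl⟩ := List.cons.inj heq
    cases l2 with
    | nil =>
      simp only [List.sum_cons, List.sum_nil, add_zero] at hsum
      subst hsum
      exact Or.inl ⟨rfl, hodd, by simpa using hOK⟩
    | cons c l3 =>
      have hev' : ∀ a' ∈ (t :: c :: l3).dropLast, Even a' := hev
      rw [List.dropLast_cons₂] at hev'
      have het : Even t := hev' t (by simp)
      have h2t : 2 ≤ t := by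
        have := hpos t (by simp); rcases het with ⟨r, rfl⟩; omega
      have hsum' : t + (c :: l3).sum = σ := by simpa [List.sum_cons, add_assoc] using hsum
      have hcsum : 1 ≤ (c :: l3).sum := by
        have : 1 ≤ c := hpos c (by simp)
        simp only [List.sum_cons]; omega
      refine Or.inr ⟨het, h2t, by omega, ?_, c :: l3, bs', by simp,
        fun a ha => hpos a (by simp [ha]), ?_, by omega, hOK, rfl⟩
      · rw [Nat.odd_iff] at hodd ⊢; rcases het with ⟨r, rfl⟩; omega
      · intro a ha; exact hev' a (List.mem_cons_of_mem _ ha)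

lemma eb_single {k t : ℕ} {bs : List ℕ} (ho : Odd t) (h : OK k bs) : EB k (t :: bs) t :=
  ⟨ho, [t], bs, by simp, by
    intro a ha
    simp only [List.mem_singleton] at ha
    subst ha
    rcases ho with ⟨r, rfl⟩
    omega, by simp, by simp, h, rfl⟩

lemma eb_cons_of {k t σ : ℕ} {bs : List ℕ} (he : Even t) (h2 : 2 ≤ t) (h : EB k bs σ) :
    EB k (t :: bs) (t + σ) := by
  obtain ⟨hodd, l, bs', hne, hpos, hev, hsum, hOK, rfl⟩ := h
  refine ⟨?_, t :: l, bs', by simp,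
    (fun a ha => by
      rcases List.mem_cons.1 ha with rfl | ha'
      · omega
      · exact hpos a ha'), ?_,
    by simp [List.sum_cons, hsum], hOK, rfl⟩
  · rw [Nat.odd_iff] at hodd ⊢; rcases he with ⟨r, rfl⟩; omega
  · cases l with
    | nil => exact absurd rfl hne
    | cons c l3 =>
      rw [List.dropLast_cons₂]
      intro a ha
      rcases List.mem_cons.1 ha with rfl | ha
      · exact he
      · exact hev a ha

end S11
namespace S11

lemma ok_middle {k : ℕ} : ∀ {cs : List ℕ}, OK k cs → ∀ {bs1 : List ℕ} {b : ℕ} {bs2 : List ℕ},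
    cs = bs1 ++ b :: bs2 →
    1 ≤ b ∧ b ≤ 2*k+1 ∧ (OK k bs2 ∨ (Even b ∧ ∃ σ, 1 ≤ σ ∧ b + σ ≤ 2*k+1 ∧ EB k bs2 σ)) := by
  intro cs h
  induction h with
  | nil => intro bs1 b bs2 h; exact absurd h.symm (by simp)
  | single a bs0 he h2 hk hOK ih =>
    intro bs1 b bs2 hcs
    cases bs1 with
    | nil =>
      simp only [List.nil_append] at hcs
      obtain ⟨rfl, rfl⟩ := List.cons.inj hcs
      exact ⟨by omega, by omega, Or.inl hOK⟩
    | cons c bs1' =>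
      rw [List.cons_append] at hcs
      obtain ⟨rfl, rfl⟩ := List.cons.inj hcs
      exact ih rfl
  | seg l bs0 hne hpos hev hsum hOK ih =>
    intro bs1 b bs2 hcs
    rcases List.append_eq_append_iff.1 hcs with ⟨a', ha1, ha2⟩ | ⟨c', hc1, hc2⟩
    · exact ih ha2
    · cases c' with
      | nil =>
        simp only [List.nil_append] at hc2
        exact ih (bs1 := []) (by simpa using hc2.symm)
      | cons d c2 =>
        obtain ⟨rfl, rfl⟩ := List.cons.inj hc2
        have hbl : b ∈ l := by rw [hc1]; simp
        have hb1 : 1 ≤ b := hpos b hbl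
        have hble : b ≤ l.sum := List.single_le_sum (by intro x hx; omega) b hbl
        cases c2 with
        | nil =>
          refine ⟨hb1, by omega, Or.inl (by simpa using hOK)⟩
        | cons e c2' =>
          have hdl : l.dropLast = bs1 ++ b :: (e :: c2').dropLast := by
            rw [hc1, List.dropLast_append_of_ne_nil (List.cons_ne_nil b (e :: c2')), List.dropLast_cons₂]
          have hbe : Even b := hev b (by rw [hdl]; simp)
          have hbs1e : ∀ a ∈ bs1, Even a := fun a ha => hev a (by rw [hdl]; simp [ha])
          have hsum_split : bs1.sum + b + (e :: c2').sum = 2*k+1 := by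
            have : l.sum = bs1.sum + (b + (e :: c2').sum) := by
              rw [hc1]; simp [List.sum_append, List.sum_cons]
            omega
          have hec : 1 ≤ (e :: c2').sum := by
            have : 1 ≤ e := hpos e (by rw [hc1]; simp)
            simp only [List.sum_cons]; omega
          have hodd : Odd ((e :: c2').sum) := by
            have h1 : Even bs1.sum := even_sum_list hbs1e
            rw [Nat.odd_iff]
            rcases h1 with ⟨r, hr⟩; rcases hbe with ⟨s, hs⟩
            omega
          refine ⟨hb1, by omega, Or.inr ⟨hbe, (e :: c2').sum, hec, by omega, ?_⟩⟩
          refine ⟨hodd, e :: c2', bs0, by simp,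
            (fun a ha => hpos a (by rw [hc1]; simp [ha])), ?_, rfl, hOK, rfl⟩
          intro a ha
          exact hev a (by rw [hdl]; simp [ha])

end S11
namespace S11

lemma gk_iff {k : ℕ} {z : List (Fin 3)} : z ∈ Gk k ↔ ∃ bs, OK k bs ∧ z = jb bs := by
  constructor
  · intro hz
    rw [Gk, Language.mem_kstar] at hz
    obtain ⟨L, rfl, hL⟩ := hz
    induction L with
    | nil => exact ⟨[], OK.nil, rfl⟩
    | cons a L' ih =>
      obtain ⟨bs', hOK', hflat⟩ := ih (fun y hy => hL y (List.mem_cons_of_mem _ hy))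
      have ha := hL a (by simp)
      rw [Lk] at ha
      rcases ha with ⟨i, h1, h2, rfl⟩ | ⟨l, hne, hpos, hsum, hev, rfl⟩
      · refine ⟨2*i :: bs', ok_cons_even ⟨i, by omega⟩ (by omega) (by omega) hOK', ?_⟩
        rw [List.flatten_cons, hflat, jb_cons]
        simp [rep, blk]
      · refine ⟨l ++ bs', OK.seg l bs' hne hpos hev hsum hOK', ?_⟩
        rw [List.flatten_cons, hflat, jb_append]
        rfl
  · rintro ⟨bs, hOK, rfl⟩
    suffices h : ∃ L : List (List (Fin 3)), jb bs = L.flatten ∧ ∀ y ∈ L, y ∈ Lk k by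
      obtain ⟨L, hL1, hL2⟩ := h
      rw [hL1]
      exact Language.join_mem_kstar hL2
    induction hOK with
    | nil => exact ⟨[], rfl, by simp⟩
    | single a bs0 he h2 hk hOK ih =>
      obtain ⟨L, hL1, hL2⟩ := ih
      refine ⟨(rep a ++ [2]) :: L, by simp [hL1], ?_⟩
      intro y hy
      rcases List.mem_cons.1 hy with rfl | hy
      · rw [Lk]
        obtain ⟨i, rfl⟩ : ∃ i, a = 2*i := by rcases he with ⟨r, rfl⟩; exact ⟨r, by omega⟩
        exact Or.inl ⟨i, by omega, by omega, rfl⟩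
      · exact hL2 y hy
    | seg l bs0 hne hpos hev hsum hOK ih =>
      obtain ⟨L, hL1, hL2⟩ := ih
      refine ⟨jb l :: L, by simp [hL1], ?_⟩
      intro y hy
      rcases List.mem_cons.1 hy with rfl | hy
      · rw [Lk]
        exact Or.inr ⟨l, hne, hpos, hsum, hev, rfl⟩
      · exact hL2 y hy

end S11
namespace S11

lemma first2 : ∀ {a b : ℕ} {X Y : List (Fin 3)},
    rep a ++ 2 :: X = rep b ++ 2 :: Y → a = b ∧ X = Y := by
  intro a
  induction a with
  | zero =>
    intro b X Y h
    cases b with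
    | zero => simpa using h
    | succ b =>
      rw [rep_succ] at h
      simp only [rep, List.replicate_zero, List.nil_append, List.cons_append] at h
      exact absurd (List.cons.inj h).1 (by decide)
  | succ a ih =>
    intro b X Y h
    cases b with
    | zero =>
      rw [rep_succ] at h
      simp only [rep, List.replicate_zero, List.nil_append, List.cons_append] at h
      exact absurd (List.cons.inj h).1 (by decide)
    | succ b =>
      rw [rep_succ, rep_succ, List.cons_append, List.cons_append] at h
      obtain ⟨h1, h2⟩ := ih (List.cons.inj h).2
      exact ⟨by omega, h2⟩

lemma peel : ∀ {v : List (Fin 3)} {c t : ℕ} {u J : List (Fin 3)},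
    rep c ++ 2 :: J = v ++ rep t ++ 2 :: u →
    (v ++ rep t = rep c ∧ u = J) ∨ (∃ v2, v = rep c ++ 2 :: v2 ∧ J = v2 ++ rep t ++ 2 :: u) := by
  intro v
  induction v with
  | nil =>
    intro c t u J h
    simp only [List.nil_append] at h ⊢
    obtain ⟨rfl, rfl⟩ := first2 h.symm
    exact Or.inl ⟨rfl, rfl⟩
  | cons d v' ih =>
    intro c t u J h
    cases c with
    | zero =>
      simp only [rep, List.replicate_zero, List.nil_append, List.cons_append] at h
      obtain ⟨rfl, h2⟩ := List.cons.inj h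
      exact Or.inr ⟨v', by simp [rep], h2⟩
    | succ c =>
      rw [rep_succ] at h
      simp only [List.cons_append, List.append_assoc] at h
      obtain ⟨rfl, h2⟩ := List.cons.inj h
      rcases ih (by simpa [List.append_assoc] using h2) with ⟨hl, rfl⟩ | ⟨v2, rfl, hJ⟩
      · left
        constructor
        · rw [rep_succ, ← hl]; simp
        · rfl
      · right
        exact ⟨v2, by simp [rep_succ], hJ⟩

lemma jb_split : ∀ {cs : List ℕ} {v : List (Fin 3)} {t : ℕ} {u : List (Fin 3)},
    jb cs = v ++ rep t ++ 2 :: u →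
    ∃ cs1 b cs2, cs = cs1 ++ b :: cs2 ∧ t ≤ b ∧ u = jb cs2 ∧ v ++ rep t = jb cs1 ++ rep b := by
  intro cs
  induction cs with
  | nil =>
    intro v t u h
    exfalso
    have := congrArg List.length h
    simp [rep] at this
  | cons c cs' ih =>
    intro v t u h
    rw [jb_cons] at h
    rcases peel h with ⟨hl, rfl⟩ | ⟨v2, rfl, hJ⟩
    · refine ⟨[], c, cs', by simp, ?_, rfl, by simpa using hl⟩
      have := congrArg List.length hl
      simp [rep] at this
      omega
    · obtain ⟨cs1', b, cs2, hcs, hb, hu, hv2⟩ := ih hJ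
      refine ⟨c :: cs1', b, cs2, by rw [hcs]; simp, hb, hu, ?_⟩
      rw [jb_cons]
      simp only [List.append_assoc, List.cons_append]
      rw [← hv2]

lemma rep_eq_jb_rep {t b : ℕ} {cs1 : List ℕ} (h : rep t = jb cs1 ++ rep b) :
    cs1 = [] ∧ t = b := by
  cases cs1 with
  | nil =>
    simp only [jb_nil, List.nil_append] at h
    have := congrArg List.length h
    simp [rep] at this
    exact ⟨rfl, this⟩
  | cons c cs' =>
    exfalso
    rw [jb_cons] at h
    have h2 : (2 : Fin 3) ∈ rep t := by
      rw [h]; simp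
    exact absurd (List.eq_of_mem_replicate h2) (by decide)

lemma snoc2_eq_jb_rep {q : List (Fin 3)} {t b : ℕ} {cs1 : List ℕ}
    (h : (q ++ [2]) ++ rep t = jb cs1 ++ rep b) (htb : t ≤ b) :
    b = t ∧ q ++ [2] = jb cs1 := by
  have hb : rep b = rep (b - t) ++ rep t := by
    rw [rep, rep, rep, ← List.replicate_add]
    congr 1
    omega
  rw [hb, ← List.append_assoc] at h
  have h2 := List.append_inj_left' h (by simp)
  by_cases hbt : b - t = 0
  · rw [hbt] at h2
    simp only [rep, List.replicate_zero, List.append_nil] at h2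
    exact ⟨by omega, h2⟩
  · exfalso
    obtain ⟨n, hn⟩ : ∃ n, b - t = n + 1 := ⟨b - t - 1, by omega⟩
    rw [hn] at h2
    have hrep : rep (n+1) = rep n ++ [1] := by
      rw [rep, rep, List.replicate_succ']
    rw [hrep, ← List.append_assoc] at h2
    have hl1 : (q ++ [2]).getLast? = some 2 := List.getLast?_concat
    have hl2 : ((jb cs1 ++ rep n) ++ [1]).getLast? = some 1 := List.getLast?_concat
    rw [h2, hl2] at hl1
    exact absurd (Option.some.inj hl1) (by decide)

end S11
namespace S11

lemma jb_inj : ∀ {bs cs : List ℕ}, jb bs = jb cs → bs = cs := by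
  intro bs
  induction bs with
  | nil =>
    intro cs h
    cases cs with
    | nil => rfl
    | cons c cs' =>
      exfalso
      have := congrArg List.length h
      simp [jb, blk, rep] at this
  | cons b bs' ih =>
    intro cs h
    cases cs with
    | nil =>
      exfalso
      have := congrArg List.length h
      simp [jb, blk, rep] at this
    | cons c cs' =>
      rw [jb_cons, jb_cons] at h
      obtain ⟨rfl, h2⟩ := first2 h
      rw [ih h2]

lemma gk_head2 {k : ℕ} {u : List (Fin 3)} : (2 :: u) ∉ Gk k := by
  intro h
  obtain ⟨bs, hOK, heq⟩ := gk_iff.1 h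
  cases bs with
  | nil => simp [jb] at heq
  | cons b bs' =>
    rw [jb_cons] at heq
    have hb : 1 ≤ b := hOK.pos b (by simp)
    obtain ⟨n, rfl⟩ : ∃ n, b = n + 1 := ⟨b - 1, by omega⟩
    rw [rep_succ] at heq
    simp only [List.cons_append] at heq
    exact absurd (List.cons.inj heq).1 (by decide)

lemma gk_zero {k : ℕ} {z : List (Fin 3)} (h0 : (0 : Fin 3) ∈ z) : z ∉ Gk k := by
  intro h
  obtain ⟨bs, hOK, rfl⟩ := gk_iff.1 h
  rcases mem_jb h0 with h | h <;> exact absurd h (by decide)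

lemma gk_last_one {k : ℕ} {v : List (Fin 3)} : (v ++ [1]) ∉ Gk k := by
  intro h
  obtain ⟨bs, hOK, heq⟩ := gk_iff.1 h
  have hjb : ∀ (bs : List ℕ), bs ≠ [] → ∃ y, jb bs = y ++ [(2 : Fin 3)] := by
    intro bs
    induction bs with
    | nil => intro h; exact absurd rfl h
    | cons b bs' ih =>
      intro _
      cases bs' with
      | nil => exact ⟨rep b, by simp⟩
      | cons c cs' =>
        obtain ⟨y, hy⟩ := ih (by simp)
        exact ⟨rep b ++ 2 :: y, by rw [jb_cons, hy]; simp⟩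
  cases bs with
  | nil => simp [jb] at heq
  | cons b bs' =>
    obtain ⟨y, hy⟩ := hjb (b :: bs') (by simp)
    rw [hy] at heq
    have := List.append_inj_right' heq (by simp)
    exact absurd (List.cons.inj this).1 (by decide)

lemma gk_split {k : ℕ} {v : List (Fin 3)} {t : ℕ} {u z : List (Fin 3)}
    (h : z ∈ Gk k) (hz : z = v ++ rep t ++ 2 :: u) :
    ∃ cs1 b cs2, OK k (cs1 ++ b :: cs2) ∧ t ≤ b ∧ u = jb cs2 ∧ v ++ rep t = jb cs1 ++ rep b := by
  obtain ⟨bs, hOK, heq⟩ := gk_iff.1 h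
  rw [hz] at heq
  obtain ⟨cs1, b, cs2, rfl, hb, hu, hv⟩ := jb_split heq.symm
  exact ⟨cs1, b, cs2, hOK, hb, hu, hv⟩

/-- run overflow kills everything -/
lemma dead_run {k : ℕ} {v : List (Fin 3)} {t : ℕ} {u : List (Fin 3)} (ht : 2*k+2 ≤ t) :
    (v ++ rep t ++ 2 :: u) ∉ Gk k := by
  intro h
  obtain ⟨cs1, b, cs2, hOK, hb, -, -⟩ := gk_split h rfl
  have := ok_middle hOK rfl
  omega

/-- a `2` directly after a `2` kills everything -/
lemma dead_22 {k : ℕ} {v u : List (Fin 3)} : (v ++ 2 :: 2 :: u) ∉ Gk k := by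
  intro h
  obtain ⟨cs1, b, cs2, hOK, hb, hu, -⟩ := gk_split (v := v) (t := 0) (u := 2 :: u) h (by simp [rep])
  cases cs2 with
  | nil => simp [jb] at hu
  | cons c cs2' =>
    rw [jb_cons] at hu
    have hc : 1 ≤ c := hOK.pos c (by simp)
    obtain ⟨n, rfl⟩ : ∃ n, c = n + 1 := ⟨c - 1, by omega⟩
    rw [rep_succ] at hu
    simp only [List.cons_append] at hu
    exact absurd (List.cons.inj hu).1 (by decide)

/-- pending partial segment: a too-long run kills everything -/
lemma dead_pending {k : ℕ} {v : List (Fin 3)} {t' σ : ℕ} {bs : List ℕ}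
    (heb : EB k bs σ) (huniq : ∀ σ', EB k bs σ' → σ' = σ) (hnok : ¬ OK k bs)
    (hbig : 2*k+1 < t' + σ) : (v ++ rep t' ++ 2 :: jb bs) ∉ Gk k := by
  intro h
  obtain ⟨cs1, b, cs2, hOK, hb, hu, -⟩ := gk_split h rfl
  have hbs : bs = cs2 := jb_inj hu
  subst hbs
  obtain ⟨hb1, hb2, hrest⟩ := ok_middle hOK rfl
  rcases hrest with hOK2 | ⟨hbe, σ'', h1, h2, heb2⟩
  · exact hnok hOK2
  · have := huniq σ'' heb2
    omega

/-- an exact odd block with pending (non-OK) tail kills everything -/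
lemma dead_odd2 {k : ℕ} {v : List (Fin 3)} {t : ℕ} {bs : List ℕ}
    (hodd : Odd t) (hnok : ¬ OK k bs) : (v ++ 2 :: (rep t ++ 2 :: jb bs)) ∉ Gk k := by
  intro h
  have hz : v ++ 2 :: (rep t ++ 2 :: jb bs) = (v ++ [2]) ++ rep t ++ 2 :: jb bs := by simp
  obtain ⟨cs1, b, cs2, hOK, hb, hu, hv⟩ := gk_split h hz
  have hbs : bs = cs2 := jb_inj hu
  subst hbs
  obtain ⟨rfl, -⟩ := snoc2_eq_jb_rep hv hb
  obtain ⟨-, -, hrest⟩ := ok_middle hOK rfl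
  rcases hrest with hOK2 | ⟨hbe, -⟩
  · exact hnok hOK2
  · rw [Nat.odd_iff] at hodd
    rcases hbe with ⟨r, hr⟩
    omega

/-- exact parse of a full word -/
lemma gk_parse {k : ℕ} {t : ℕ} {bs : List ℕ} :
    (rep t ++ 2 :: jb bs) ∈ Gk k ↔ OK k (t :: bs) := by
  constructor
  · intro h
    obtain ⟨cs1, b, cs2, hOK, hb, hu, hv⟩ := gk_split (v := []) (t := t) (u := jb bs) h (by simp)
    simp only [List.nil_append] at hv
    obtain ⟨rfl, rfl⟩ := rep_eq_jb_rep hv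
    have hbs : bs = cs2 := jb_inj hu
    subst hbs
    simpa using hOK
  · intro h
    exact gk_iff.2 ⟨t :: bs, h, by rw [jb_cons]⟩

end S11
namespace S11

abbrev St (k : ℕ) := Fin (2*k+2) ⊕ Fin k ⊕ Fin (2*k-1) ⊕ Bool

def dead (k : ℕ) : St k := Sum.inr (Sum.inr (Sum.inr false))
def init (k : ℕ) : St k := Sum.inr (Sum.inr (Sum.inr true))
def stA (k t : ℕ) : St k := if h : t < 2*k+2 then Sum.inl ⟨t, h⟩ else dead k
def stC (k i : ℕ) : St k := if h : i < k then Sum.inr (Sum.inl ⟨i, h⟩) else dead k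
def stR (k j : ℕ) : St k := if h : j < 2*k-1 then Sum.inr (Sum.inr (Sum.inl ⟨j, h⟩)) else dead k

def step (k : ℕ) (s : St k) (c : Fin 3) : St k :=
  match s with
  | Sum.inl t =>
      if c = 1 then (if t.1 + 1 ≤ 2*k+1 then stA k (t.1+1) else dead k)
      else if c = 2 then
        (if t.1 = 2*k+1 then stA k 0
         else if t.1 % 2 = 0 ∧ 2 ≤ t.1 then stA k 0
         else if t.1 % 2 = 1 then stC k ((t.1-1)/2)
         else dead k)
      else dead k
  | Sum.inr (Sum.inl i) => if c = 1 then stR k (2*i.1) else dead k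
  | Sum.inr (Sum.inr (Sum.inl j)) =>
      if c = 1 then (if j.1 + 3 ≤ 2*k then stR k (j.1+1) else stA k (2*k+1))
      else if c = 2 then (if (j.1+2) % 2 = 1 then stC k ((j.1+1)/2) else dead k)
      else dead k
  | Sum.inr (Sum.inr (Sum.inr true)) => if c = 2 then stA k 0 else dead k
  | Sum.inr (Sum.inr (Sum.inr false)) => dead k

def accept (k : ℕ) : Set (St k) :=
  {s | match s with
    | Sum.inl t => (t.1 % 2 = 0 ∧ 2 ≤ t.1) ∨ t.1 = 2*k+1
    | Sum.inr (Sum.inl _) => False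
    | Sum.inr (Sum.inr (Sum.inl _)) => False
    | Sum.inr (Sum.inr (Sum.inr b)) => b = true}

def M (k : ℕ) : DFA (Fin 3) (St k) := ⟨step k, init k, accept k⟩

def SAform (k t : ℕ) (w : List (Fin 3)) : Prop :=
  ∃ bs, OK k bs ∧ w = rep t ++ 2 :: jb bs ∧ ∀ σ, EB k bs σ → 2*k+1 ≤ σ

def Pend (k σ : ℕ) (bs : List ℕ) : Prop :=
  EB k bs σ ∧ (∀ σ', EB k bs σ' → σ' = σ) ∧ ¬ OK k bs

def Cform (k σ : ℕ) (w : List (Fin 3)) : Prop := ∃ bs, Pend k σ bs ∧ w = 2 :: jb bs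

def Rform (k r : ℕ) (w : List (Fin 3)) : Prop :=
  ∃ t σ bs, 1 ≤ t ∧ t + σ = r ∧ Odd σ ∧ Pend k σ bs ∧ w = rep t ++ 2 :: jb bs

def Inv (k : ℕ) (s : St k) (x : List (Fin 3)) : Prop :=
  match s with
  | Sum.inl t => SAform k t.1 x.reverse ∨ (t.1 = 2*k+1 ∧ Rform k (2*k+1) x.reverse)
  | Sum.inr (Sum.inl i) => Cform k (2*i.1+1) x.reverse
  | Sum.inr (Sum.inr (Sum.inl j)) => Rform k (j.1+2) x.reverse
  | Sum.inr (Sum.inr (Sum.inr true)) => x = []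
  | Sum.inr (Sum.inr (Sum.inr false)) => ∀ v, (v ++ x.reverse) ∉ Gk k

lemma inv_dead {k : ℕ} {x : List (Fin 3)} (h : ∀ v, (v ++ x.reverse) ∉ Gk k) :
    Inv k (dead k) x := h

lemma inv_stA {k t : ℕ} {x : List (Fin 3)}
    (h : SAform k t x.reverse ∨ (t = 2*k+1 ∧ Rform k (2*k+1) x.reverse)) (ht : t < 2*k+2) :
    Inv k (stA k t) x := by
  rw [stA, dif_pos ht]
  exact h

lemma inv_stC {k i : ℕ} {x : List (Fin 3)} (h : Cform k (2*i+1) x.reverse) (hi : i < k) :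
    Inv k (stC k i) x := by
  rw [stC, dif_pos hi]
  exact h

lemma inv_stR {k j : ℕ} {x : List (Fin 3)} (h : Rform k (j+2) x.reverse) (hj : j < 2*k-1) :
    Inv k (stR k j) x := by
  rw [stR, dif_pos hj]
  exact h

lemma even_of_mod2 {t : ℕ} (h : t % 2 = 0) : Even t := Nat.even_iff.2 h
lemma odd_of_mod2 {t : ℕ} (h : t % 2 = 1) : Odd t := Nat.odd_iff.2 h

lemma pend_cons {k t σ : ℕ} {bs : List ℕ} (ht : Even t) (h2 : 2 ≤ t) (hp : Pend k σ bs)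
    (hsum : t + σ ≠ 2*k+1) : Pend k (t+σ) (t :: bs) := by
  obtain ⟨heb, huniq, hnok⟩ := hp
  refine ⟨eb_cons_of ht h2 heb, ?_, ?_⟩
  · intro σ' h'
    rcases eb_cons h' with ⟨rfl, ho, -⟩ | ⟨-, -, hlt, h''⟩
    · exact absurd (Nat.even_iff.1 ht) (by rw [Nat.odd_iff] at ho; omega)
    · have := huniq _ h''
      omega
  · intro hOK
    rcases ok_cons hOK with ⟨-, -, -, h'⟩ | ⟨he, -⟩ | ⟨-, -, hle', h'⟩
    · exact hnok h'
    · rw [Nat.even_iff] at ht; omega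
    · have := huniq _ h'
      omega

lemma pend_new {k t : ℕ} {bs : List ℕ} (ho : Odd t) (hne : t ≠ 2*k+1) (hOK : OK k bs) :
    Pend k t (t :: bs) := by
  refine ⟨eb_single ho hOK, ?_, ?_⟩
  · intro σ' h'
    rcases eb_cons h' with ⟨rfl, -, -⟩ | ⟨he, -, -, -⟩
    · rfl
    · rw [Nat.odd_iff] at ho; rw [Nat.even_iff] at he; omega
  · intro hOK'
    rw [Nat.odd_iff] at ho
    rcases ok_cons hOK' with ⟨he, -⟩ | ⟨h', -⟩ | ⟨he, -⟩
    · rw [Nat.even_iff] at he; omega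
    · exact hne h'
    · rw [Nat.even_iff] at he; omega

lemma sa_cons_ok {k t : ℕ} {bs : List ℕ} (hOK : OK k bs)
    (hNE : ∀ σ, EB k bs σ → 2*k+1 ≤ σ)
    (ht : (Even t ∧ 2 ≤ t ∧ t ≤ 2*k) ∨ t = 2*k+1) :
    OK k (t :: bs) ∧ (∀ σ, EB k (t :: bs) σ → 2*k+1 ≤ σ) := by
  constructor
  · rcases ht with ⟨he, h2, hle⟩ | rfl
    · exact ok_cons_even he h2 hle hOK
    · exact ok_cons_top hOK
  · intro σ h'
    rcases eb_cons h' with ⟨rfl, ho, -⟩ | ⟨-, -, hlt, h''⟩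
    · rcases ht with ⟨he, -, -⟩ | rfl
      · rw [Nat.odd_iff] at ho; rw [Nat.even_iff] at he; omega
      · omega
    · have := hNE _ h''
      omega

end S11
namespace S11

lemma step_inv {k : ℕ} (s : St k) (c : Fin 3) (x : List (Fin 3)) (h : Inv k s x) :
    Inv k (step k s c) (x ++ [c]) := by
  have hrev : (x ++ [c]).reverse = c :: x.reverse := by simp
  obtain ⟨cv, hcv⟩ := c
  rcases s with t | i | j | b
  · -- SA states
    have htlt : t.1 < 2*k+2 := t.isLt
    have hI : SAform k t.1 x.reverse ∨ (t.1 = 2*k+1 ∧ Rform k (2*k+1) x.reverse) := h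
    simp only [step]
    interval_cases cv
    · -- c = 0
      rw [if_neg (by simp [Fin.ext_iff]), if_neg (by simp [Fin.ext_iff])]
      exact inv_dead fun v => gk_zero (by simp)
    · -- c = 1
      rw [if_pos (by simp [Fin.ext_iff])]
      by_cases hlt : t.1 + 1 ≤ 2*k+1
      · rw [if_pos hlt]
        refine inv_stA ?_ (by omega)
        rcases hI with ⟨bs, hOK, hw, hNE⟩ | ⟨hteq, -⟩
        · exact Or.inl ⟨bs, hOK, by rw [hrev, hw]; simp [rep_succ], hNE⟩
        · omega
      · rw [if_neg hlt]
        apply inv_dead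
        intro v
        rw [hrev]
        rcases hI with ⟨bs, hOK, hw, hNE⟩ | ⟨hteq, t', σ, bs, ht1, hsum, hodd, hp, hw⟩
        · rw [hw]
          have he : v ++ (⟨1, hcv⟩ : Fin 3) :: (rep t.1 ++ 2 :: jb bs)
              = v ++ rep (t.1+1) ++ 2 :: jb bs := by
            simp [rep_succ]
          rw [he]
          exact dead_run (by omega)
        · rw [hw]
          have he : v ++ (⟨1, hcv⟩ : Fin 3) :: (rep t' ++ 2 :: jb bs)
              = v ++ rep (t'+1) ++ 2 :: jb bs := by
            simp [rep_succ]
          rw [he]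
          exact dead_pending hp.1 hp.2.1 hp.2.2 (by omega)
    · -- c = 2
      rw [if_neg (by simp [Fin.ext_iff]), if_pos (by simp [Fin.ext_iff])]
      by_cases htop : t.1 = 2*k+1
      · rw [if_pos htop]
        refine inv_stA (Or.inl ?_) (by omega)
        rcases hI with ⟨bs, hOK, hw, hNE⟩ | ⟨-, t', σ, bs, ht1, hsum, hodd, hp, hw⟩
        · refine ⟨(2*k+1) :: bs, ok_cons_top hOK, ?_, ?_⟩
          · rw [hrev, hw, htop, jb_cons]
            simp [rep]
          · intro σ h'
            rcases eb_cons h' with ⟨rfl, -, -⟩ | ⟨he, -, -, -⟩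
            · omega
            · rw [Nat.even_iff] at he; omega
        · have hte : Even t' := by
            rw [Nat.even_iff]; rw [Nat.odd_iff] at hodd; omega
          have ht2' : 2 ≤ t' := by rcases hte with ⟨r, rfl⟩; omega
          refine ⟨t' :: bs, ok_cons_eb hte ht2' hp.1 (by omega), ?_, ?_⟩
          · rw [hrev, hw, jb_cons]
            simp [rep]
          · intro σ'' h'
            rcases eb_cons h' with ⟨rfl, ho, -⟩ | ⟨-, -, hlt', h''⟩
            · rw [Nat.odd_iff] at ho; rw [Nat.even_iff] at hte; omega
            · have := hp.2.1 _ h''; omega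
      · rw [if_neg htop]
        have hSA : SAform k t.1 x.reverse := hI.resolve_right fun hr => htop hr.1
        obtain ⟨bs, hOK, hw, hNE⟩ := hSA
        by_cases hev2 : t.1 % 2 = 0 ∧ 2 ≤ t.1
        · rw [if_pos hev2]
          refine inv_stA (Or.inl ?_) (by omega)
          have hob := sa_cons_ok hOK hNE (Or.inl ⟨even_of_mod2 hev2.1, hev2.2, by omega⟩)
          refine ⟨t.1 :: bs, hob.1, ?_, hob.2⟩
          rw [hrev, hw, jb_cons]
          simp [rep]
        · rw [if_neg hev2]
          by_cases hodd : t.1 % 2 = 1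
          · rw [if_pos hodd]
            have hik : (t.1-1)/2 < k := by omega
            have htt : 2*((t.1-1)/2)+1 = t.1 := by omega
            refine inv_stC ?_ hik
            rw [htt]
            refine ⟨t.1 :: bs, pend_new (odd_of_mod2 hodd) htop hOK, ?_⟩
            rw [hrev, hw, jb_cons]
            rfl
          · rw [if_neg hodd]
            have ht0 : t.1 = 0 := by omega
            apply inv_dead
            intro v
            rw [hrev, hw, ht0]
            have he : v ++ (⟨2, hcv⟩ : Fin 3) :: (rep 0 ++ 2 :: jb bs)
                = v ++ 2 :: 2 :: jb bs := by
              simp [rep]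
            rw [he]
            exact dead_22
  · -- C states
    have hik : i.1 < k := i.isLt
    obtain ⟨bs, hp, hw⟩ := h
    simp only [step]
    interval_cases cv
    · rw [if_neg (by simp [Fin.ext_iff])]
      exact inv_dead fun v => gk_zero (by simp)
    · rw [if_pos (by simp [Fin.ext_iff])]
      refine inv_stR ?_ (by omega)
      refine ⟨1, 2*i.1+1, bs, le_refl 1, by omega, ⟨i.1, by omega⟩, hp, ?_⟩
      rw [hrev, hw]
      rfl
    · rw [if_neg (by simp [Fin.ext_iff])]
      apply inv_dead
      intro v
      rw [hrev, hw]
      exact dead_22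
  · -- R states
    have hjk : j.1 < 2*k-1 := j.isLt
    obtain ⟨t', σ, bs, ht1, hsum, hodd, hp, hw⟩ := h
    simp only [step]
    interval_cases cv
    · rw [if_neg (by simp [Fin.ext_iff]), if_neg (by simp [Fin.ext_iff])]
      exact inv_dead fun v => gk_zero (by simp)
    · rw [if_pos (by simp [Fin.ext_iff])]
      by_cases hj3 : j.1 + 3 ≤ 2*k
      · rw [if_pos hj3]
        refine inv_stR ?_ (by omega)
        refine ⟨t'+1, σ, bs, by omega, by omega, hodd, hp, ?_⟩
        rw [hrev, hw]
        simp [rep_succ]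
      · rw [if_neg hj3]
        refine inv_stA (Or.inr ⟨rfl, ?_⟩) (by omega)
        refine ⟨t'+1, σ, bs, by omega, by omega, hodd, hp, ?_⟩
        rw [hrev, hw]
        simp [rep_succ]
    · rw [if_neg (by simp [Fin.ext_iff]), if_pos (by simp [Fin.ext_iff])]
      by_cases hpar : (j.1+2) % 2 = 1
      · rw [if_pos hpar]
        have hik : (j.1+1)/2 < k := by omega
        have htt : 2*((j.1+1)/2)+1 = j.1+2 := by omega
        refine inv_stC ?_ hik
        rw [htt]
        have hte : Even t' := by
          rw [Nat.even_iff]; rw [Nat.odd_iff] at hodd; omega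
        have ht2' : 2 ≤ t' := by rcases hte with ⟨r, rfl⟩; omega
        have hpc := pend_cons hte ht2' hp (by omega)
        rw [hsum] at hpc
        refine ⟨t' :: bs, hpc, ?_⟩
        rw [hrev, hw, jb_cons]
        rfl
      · rw [if_neg hpar]
        apply inv_dead
        intro v
        rw [hrev, hw]
        have hto : Odd t' := by
          rw [Nat.odd_iff] at hodd ⊢; omega
        exact dead_odd2 hto hp.2.2
  · -- init / dead
    rcases b with _ | _
    · -- dead
      have hd : ∀ v, (v ++ x.reverse) ∉ Gk k := h
      simp only [step]
      apply inv_dead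
      intro v
      rw [hrev]
      have he : v ++ (⟨cv, hcv⟩ : Fin 3) :: x.reverse
          = (v ++ [(⟨cv, hcv⟩ : Fin 3)]) ++ x.reverse := by simp
      rw [he]
      exact hd _
    · -- init
      have hx : x = [] := h
      subst hx
      simp only [step]
      interval_cases cv
      · rw [if_neg (by simp [Fin.ext_iff])]
        exact inv_dead fun v => gk_zero (by simp)
      · rw [if_neg (by simp [Fin.ext_iff])]
        exact inv_dead fun v => by simpa using (gk_last_one (k := k) (v := v))
      · rw [if_pos (by simp [Fin.ext_iff])]
        refine inv_stA (Or.inl ?_) (by omega)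
        exact ⟨[], OK.nil, by simp [rep], fun σ h' => absurd h' (fun he => EB_nil he)⟩

end S11
namespace S11

lemma inv_accept {k : ℕ} (s : St k) (x : List (Fin 3)) (h : Inv k s x) :
    s ∈ accept k ↔ x.reverse ∈ Gk k := by
  rcases s with t | i | j | b
  · have htlt : t.1 < 2*k+2 := t.isLt
    have hI : SAform k t.1 x.reverse ∨ (t.1 = 2*k+1 ∧ Rform k (2*k+1) x.reverse) := h
    show ((t.1 % 2 = 0 ∧ 2 ≤ t.1) ∨ t.1 = 2*k+1) ↔ _
    constructor
    · intro hacc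
      rcases hI with ⟨bs, hOK, hw, hNE⟩ | ⟨hteq, t', σ, bs, ht1, hsum, hodd, hp, hw⟩
      · rw [hw]
        refine gk_parse.2 ((sa_cons_ok hOK hNE ?_).1)
        rcases hacc with ⟨h1, h2⟩ | h1
        · exact Or.inl ⟨even_of_mod2 h1, h2, by omega⟩
        · exact Or.inr h1
      · rw [hw]
        have hte : Even t' := by
          rw [Nat.even_iff]; rw [Nat.odd_iff] at hodd; omega
        have ht2' : 2 ≤ t' := by rcases hte with ⟨r, rfl⟩; omega
        exact gk_parse.2 (ok_cons_eb hte ht2' hp.1 (by omega))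
    · intro hmem
      rcases hI with ⟨bs, hOK, hw, hNE⟩ | ⟨hteq, -⟩
      · rw [hw] at hmem
        have hok := gk_parse.1 hmem
        rcases ok_cons hok with ⟨he, h2, hle, -⟩ | ⟨heq, -⟩ | ⟨he, h2, hle, heb⟩
        · exact Or.inl ⟨Nat.even_iff.1 he, h2⟩
        · exact Or.inr heq
        · have := hNE _ heb
          omega
      · exact Or.inr hteq
  · obtain ⟨bs, hp, hw⟩ := h
    show False ↔ _
    simp only [false_iff]
    rw [hw]
    exact gk_head2
  · have hjk : j.1 < 2*k-1 := j.isLt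
    obtain ⟨t', σ, bs, ht1, hsum, hodd, hp, hw⟩ := h
    show False ↔ _
    simp only [false_iff]
    rw [hw]
    intro hmem
    have hok := gk_parse.1 hmem
    rcases ok_cons hok with ⟨-, -, -, hOK⟩ | ⟨-, hOK⟩ | ⟨-, h2, hle, heb⟩
    · exact hp.2.2 hOK
    · exact hp.2.2 hOK
    · have := hp.2.1 _ heb
      omega
  · cases b
    · have hd : ∀ v, (v ++ x.reverse) ∉ Gk k := h
      show (false = true) ↔ _
      simp only [Bool.false_eq_true, false_iff]
      intro hmem
      exact hd [] (by simpa using hmem)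
    · have hx : x = [] := h
      subst hx
      show (true = true) ↔ _
      simp only [true_iff]
      exact Language.nil_mem_kstar _

lemma inv_eval {k : ℕ} (x : List (Fin 3)) : Inv k ((M k).eval x) x := by
  induction x using List.reverseRecOn with
  | nil => exact rfl
  | append_singleton xs c ih =>
    rw [DFA.eval_append_singleton]
    exact step_inv _ c xs ih

lemma M_accepts {k : ℕ} : (M k).accepts = {w | w.reverse ∈ Gk k} := by
  ext x
  rw [DFA.mem_accepts]
  exact inv_accept _ x (inv_eval x)

end S11

theorem stmt_11 (k : ℕ) (hk : 1 ≤ k) :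
    ∃ m ≤ 5 * k + 3, ∃ M : DFA (Fin 3) (Fin m),
      M.accepts = {w | w.reverse ∈ Gk k} := by
  refine ⟨5*k+3, le_refl _, ?_⟩
  have hcard : Fintype.card (S11.St k) = 5*k+3 := by
    simp only [S11.St, Fintype.card_sum, Fintype.card_fin, Fintype.card_bool]
    omega
  let e : S11.St k ≃ Fin (5*k+3) := Fintype.equivFinOfCardEq hcard
  let M' : DFA (Fin 3) (Fin (5*k+3)) :=
    ⟨fun s c => e ((S11.M k).step (e.symm s) c), e ((S11.M k).start),
      {s | e.symm s ∈ (S11.M k).accept}⟩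
  refine ⟨M', ?_⟩
  have hev : ∀ (x : List (Fin 3)) (s : S11.St k),
      M'.evalFrom (e s) x = e ((S11.M k).evalFrom s x) := by
    intro x
    induction x with
    | nil => intro s; rfl
    | cons c xs ih =>
      intro s
      show M'.evalFrom (e ((S11.M k).step (e.symm (e s)) c)) xs = _
      rw [Equiv.symm_apply_apply]
      exact ih ((S11.M k).step s c)
  ext x
  rw [DFA.mem_accepts]
  have h1 : M'.eval x = e ((S11.M k).eval x) := hev x _
  have h2 : (M'.eval x ∈ M'.accept) ↔ ((S11.M k).eval x ∈ (S11.M k).accept) := by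
    rw [h1]
    simp only [M', Set.mem_setOf_eq, Equiv.symm_apply_apply]
  rw [h2, ← DFA.mem_accepts, S11.M_accepts]
end

section
/- Let k ≥ 1 and let z_k ∈ G_k be a nonempty word with lsep(z_k, H_k) ≥ 2^k. Then for any two DFAs D, D' each with at most 2^{k/2} − 1 states, there exists a word w ∈ H_k such that δ_D(w) = δ_D(z_k) and δ_{D'}(w) = δ_{D'}(z_k). -/
open Computability

theorem stmt_14 (k : ℕ) (hk : 1 ≤ k) (z : List (Fin 3)) (hz : z ∈ Gk k) (hz' : z ≠ [])
    (hlsep : ∀ {τ : Type} [Fintype τ] (M : DFA (Fin 3) τ),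
      z ∈ M.accepts → (∀ w ∈ Hk k, w ∉ M.accepts) → 2 ^ k ≤ Fintype.card τ)
    {σ σ' : Type} [Fintype σ] [Fintype σ']
    (D : DFA (Fin 3) σ) (D' : DFA (Fin 3) σ')
    (hD : (Fintype.card σ : ℝ) ≤ 2 ^ ((k : ℝ) / 2) - 1)
    (hD' : (Fintype.card σ' : ℝ) ≤ 2 ^ ((k : ℝ) / 2) - 1) :
    ∃ w ∈ Hk k, D.eval w = D.eval z ∧ D'.eval w = D'.eval z := by

  by_contra h
  push_neg at h
  set M : DFA (Fin 3) (σ × σ') :=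
    { step := fun p a => (D.step p.1 a, D'.step p.2 a)
      start := (D.start, D'.start)
      accept := {p | p = (D.eval z, D'.eval z)} } with hM
  have hev : ∀ (w : List (Fin 3)) (s : σ) (s' : σ'),
      M.evalFrom (s, s') w = (D.evalFrom s w, D'.evalFrom s' w) := by
    intro w
    induction w with
    | nil => intro s s'; rfl
    | cons a t ih => intro s s'; simpa [DFA.evalFrom] using ih (D.step s a) (D'.step s' a)
  have hzM : z ∈ M.accepts := by
    show M.evalFrom M.start z ∈ M.accept
    rw [show M.start = (D.start, D'.start) from rfl, hev]
    rfl
  have hHM : ∀ w ∈ Hk k, w ∉ M.accepts := by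
    intro w hw hacc
    have hacc' : M.eval w = (D.eval z, D'.eval z) := hacc
    rw [DFA.eval, hM] at hacc'
    simp only [hev] at hacc'
    exact h w hw (congrArg Prod.fst ((hev w D.start D'.start).symm.trans hacc')) (congrArg Prod.snd ((hev w D.start D'.start).symm.trans hacc'))
  have hcard := hlsep M hzM hHM
  rw [Fintype.card_prod] at hcard
  have hcardR : ((2:ℝ)^k) ≤ (Fintype.card σ : ℝ) * (Fintype.card σ' : ℝ) := by
    exact_mod_cast hcard
  have h1 : (0:ℝ) ≤ (2:ℝ) ^ ((k:ℝ)/2) - 1 := le_trans (Nat.cast_nonneg _) hD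
  have hmul : (Fintype.card σ : ℝ) * (Fintype.card σ' : ℝ) ≤ ((2:ℝ)^((k:ℝ)/2) - 1)^2 := by
    rw [sq]; exact mul_le_mul hD hD' (Nat.cast_nonneg _) h1
  have hpow : (2:ℝ)^((k:ℝ)/2) * (2:ℝ)^((k:ℝ)/2) = (2:ℝ)^(k:ℕ) := by
    rw [← Real.rpow_natCast 2 k, ← Real.rpow_add (by norm_num)]
    ring_nf
  have hone : (1:ℝ) ≤ (2:ℝ)^((k:ℝ)/2) := by
    have : (0:ℝ) ≤ (k:ℝ)/2 := by positivity
    calc (1:ℝ) = (2:ℝ)^(0:ℝ) := by simp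
    _ ≤ (2:ℝ)^((k:ℝ)/2) := Real.rpow_le_rpow_of_exponent_le (by norm_num) this
  nlinarith [hcardR, hmul, hpow, hone]
end
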